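/- arXiv:1907.01366 — 2 statements merged into one kernel-verified Lean document; each statement's English description precedes it below -/
import Mathlib

section
/- Let E be a C*-correspondence over a C*-algebra A, and let (π, t) be a rigged representation of E on a Hilbert space K that is a c-dilation of a completely contractive representation (ρ∘ι, ρ∘T) on a subspace H ⊆ K, where (ρ∘ι, ρ∘T) is itself rigged. Then H is reducing for the representation, i.e. the dilation decomposes as a direct sum: π = (ρ∘ι) ⊕ σ and t = (ρ∘T) ⊕ s for suitable maps σ, s. -/
/-!
With `T₀ = V* T V` the compression of `T = π a` or `T = t ξ`, the rigged relations for both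
representations give `V* (T* T) V = T₀* T₀` (via `π (a* a)`, resp. `π ⟨ξ, ξ⟩`). Hence the
off-diagonal corner vanishes: `‖T V h - V T₀ h‖² = ‖T₀ h‖² - 2 ‖T₀ h‖² + ‖T₀ h‖² = 0`, so `V`
intertwines. Invariance of the orthogonal complement of `V H` is the adjoint form of
co-invariance.
-/

/-- A C*-correspondence structure on a normed space `E` over a C*-algebra `A`:
an `A`-valued inner product, a right `A`-action, and a left `A`-action by
adjointable (bounded) operators. -/
structure CorrData (A : Type*) [NonUnitalCStarAlgebra A] [PartialOrder A] [StarOrderedRing A]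
    (E : Type*) [NormedAddCommGroup E] [NormedSpace ℂ E] where
  inner : E → E → A
  rsmul : E → A → E
  lsmul : A → E →L[ℂ] E
  inner_add_left : ∀ x y z, inner (x + y) z = inner x z + inner y z
  inner_add_right : ∀ x y z, inner x (y + z) = inner x y + inner x z
  inner_smul_right : ∀ (c : ℂ) (x y : E), inner x (c • y) = c • inner x y
  star_inner : ∀ x y, star (inner x y) = inner y x
  inner_self_nonneg : ∀ x, 0 ≤ inner x x
  inner_rsmul_right : ∀ x y a, inner x (rsmul y a) = inner x y * a
  rsmul_add : ∀ x a b, rsmul x (a + b) = rsmul x a + rsmul x b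
  add_rsmul : ∀ x y a, rsmul (x + y) a = rsmul x a + rsmul y a
  rsmul_mul : ∀ x a b, rsmul (rsmul x a) b = rsmul x (a * b)
  lsmul_add : ∀ a b, lsmul (a + b) = lsmul a + lsmul b
  lsmul_mul : ∀ a b, lsmul (a * b) = (lsmul a).comp (lsmul b)
  lsmul_adjoint : ∀ a x y, inner (lsmul a x) y = inner x (lsmul (star a) y)
  norm_eq : ∀ x, ‖x‖ = Real.sqrt ‖inner x x‖

/-- A rigged (isometric) representation `(π, t)` of a C*-correspondence in a
C*-algebra `C`. -/
def IsRiggedRep {A : Type*} [NonUnitalCStarAlgebra A] [PartialOrder A] [StarOrderedRing A]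
    {E : Type*} [NormedAddCommGroup E] [NormedSpace ℂ E]
    {C : Type*} [NonUnitalCStarAlgebra C]
    (c : CorrData A E) (π : A →⋆ₙₐ[ℂ] C) (t : E →ₗ[ℂ] C) : Prop :=
  (∀ (a b : A) (x : E), π a * t x * π b = t (c.lsmul a (c.rsmul x b))) ∧
  (∀ x y : E, star (t x) * t y = π (c.inner x y))

/-- `(T, π, t)` is a universal rigged representation: the Toeplitz–Pimsner algebra. -/
def IsUniversalToeplitz {A : Type*} [NonUnitalCStarAlgebra A] [PartialOrder A]
    [StarOrderedRing A] {E : Type*} [NormedAddCommGroup E] [NormedSpace ℂ E]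
    (c : CorrData A E) (T : Type*) [NonUnitalCStarAlgebra T]
    (π : A →⋆ₙₐ[ℂ] T) (t : E →ₗ[ℂ] T) : Prop :=
  IsRiggedRep c π t ∧
  ∀ (C : Type) (_ : NonUnitalCStarAlgebra C), ∀ (π' : A →⋆ₙₐ[ℂ] C) (t' : E →ₗ[ℂ] C),
    IsRiggedRep c π' t' →
    ∃! ρ : T →⋆ₙₐ[ℂ] C, (∀ a, ρ (π a) = π' a) ∧ (∀ x, ρ (t x) = t' x)

/-- A realization of the spatial (minimal) tensor product of C*-algebras:
a bilinear map `j : A × B → T` which is multiplicative, star-preserving,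
cross-norm multiplicative on elementary tensors, and has dense range span. -/
def IsCStarTensor {A B T : Type*} [NonUnitalCStarAlgebra A] [NonUnitalCStarAlgebra B]
    [NonUnitalCStarAlgebra T] (j : A →ₗ[ℂ] B →ₗ[ℂ] T) : Prop :=
  (∀ (a a' : A) (b b' : B), j a b * j a' b' = j (a * a') (b * b')) ∧
  (∀ a b, star (j a b) = j (star a) (star b)) ∧
  (∀ a b, ‖j a b‖ = ‖a‖ * ‖b‖) ∧
  (Submodule.span ℂ {x : T | ∃ a b, x = j a b}).topologicalClosure = ⊤

open scoped InnerProductSpace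

section Compression

variable {𝕜 H K : Type*} [RCLike 𝕜] [NormedAddCommGroup K] [InnerProductSpace 𝕜 K]

open ContinuousLinearMap

theorem inner_apply_eq_zero_of_star_apply_mem [CompleteSpace K] (T : K →L[𝕜] K) (v : H → K)
    (hco : ∀ h, ∃ h', star T (v h) = v h') {k : K} (hk : ∀ h, ⟪v h, k⟫_𝕜 = 0) (h : H) :
    ⟪v h, T k⟫_𝕜 = 0 := by
  obtain ⟨h', hh'⟩ := hco h
  rw [← adjoint_inner_left, ← star_eq_adjoint, hh', hk]

variable [NormedAddCommGroup H] [InnerProductSpace 𝕜 H]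

theorem LinearIsometry.eq_apply_of_inner_eq_of_norm_eq (V : H →ₗᵢ[𝕜] K) {u : K} {w : H}
    (hinner : ∀ h, ⟪V h, u⟫_𝕜 = ⟪h, w⟫_𝕜) (hnorm : ‖u‖ = ‖w‖) : u = V w := by
  have hre : RCLike.re ⟪V w, u⟫_𝕜 = ‖w‖ ^ 2 := by rw [hinner, inner_self_eq_norm_sq]
  have : ‖V w - u‖ ^ 2 = 0 := by
    rw [@norm_sub_sq 𝕜, hre, V.norm_map, hnorm]
    ring
  exact (norm_sub_eq_zero_iff.mp (pow_eq_zero_iff two_ne_zero |>.mp this)).symm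

variable [CompleteSpace H] [CompleteSpace K]

noncomputable def compression (V : H →ₗᵢ[𝕜] K) (T : K →L[𝕜] K) : H →L[𝕜] H :=
  (adjoint V.toContinuousLinearMap).comp (T.comp V.toContinuousLinearMap)

theorem inner_apply_eq_inner_compression (V : H →ₗᵢ[𝕜] K) (T : K →L[𝕜] K) (h h' : H) :
    ⟪V h', T (V h)⟫_𝕜 = ⟪h', compression V T h⟫_𝕜 := by
  rw [compression, comp_apply, adjoint_inner_right]
  rfl

theorem apply_eq_of_compression_star_mul_self (V : H →ₗᵢ[𝕜] K) (T : K →L[𝕜] K)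
    (T₀ : H →L[𝕜] H) (hT₀ : T₀ = compression V T)
    (hstar : compression V (star T * T) = star T₀ * T₀) (h : H) :
    T (V h) = V (T₀ h) := by
  refine V.eq_apply_of_inner_eq_of_norm_eq (fun h' => ?_) ?_
  · rw [hT₀, inner_apply_eq_inner_compression]
  · refine (sq_eq_sq₀ (norm_nonneg _) (norm_nonneg _)).mp ?_
    rw [apply_norm_sq_eq_inner_adjoint_right, apply_norm_sq_eq_inner_adjoint_right,
      ← star_eq_adjoint, ← star_eq_adjoint, ← mul_def, ← mul_def, ← hstar,
      ← inner_apply_eq_inner_compression]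

end Compression

/-- If `(π, t)` is a rigged representation of a C*-correspondence `E` on a Hilbert space
`K` which is a c-dilation (through the isometry `V : H → K`, with the copy of `H`
co-invariant) of a representation `(π₀, t₀)` on `H` which is itself rigged, then the
copy of `H` is reducing and the dilation decomposes as a direct sum: `V` intertwines
`(π₀, t₀)` with `(π, t)`, and the orthogonal complement of the range of `V` is
invariant. -/
theorem rigged_cDilation_of_rigged_decomposes
    {A : Type} [NonUnitalCStarAlgebra A] [PartialOrder A] [StarOrderedRing A]
    {E : Type} [NormedAddCommGroup E] [NormedSpace ℂ E] (c : CorrData A E)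
    {H K : Type} [NormedAddCommGroup H] [InnerProductSpace ℂ H] [CompleteSpace H]
    [NormedAddCommGroup K] [InnerProductSpace ℂ K] [CompleteSpace K]
    (V : H →ₗᵢ[ℂ] K)
    (π : A →⋆ₙₐ[ℂ] (K →L[ℂ] K)) (t : E →ₗ[ℂ] (K →L[ℂ] K))
    (hrigged : IsRiggedRep c π t)
    (π₀ : A →⋆ₙₐ[ℂ] (H →L[ℂ] H)) (t₀ : E →ₗ[ℂ] (H →L[ℂ] H))
    (hπ₀ : ∀ a : A, π₀ a = (ContinuousLinearMap.adjoint V.toContinuousLinearMap).comp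
      ((π a).comp V.toContinuousLinearMap))
    (ht₀ : ∀ x : E, t₀ x = (ContinuousLinearMap.adjoint V.toContinuousLinearMap).comp
      ((t x).comp V.toContinuousLinearMap))
    (hrigged₀ : IsRiggedRep c π₀ t₀)
    -- co-invariance of the copy of `H`
    (hco_π : ∀ (a : A) (h : H), ∃ h' : H, star (π a) (V h) = V h')
    (hco_t : ∀ (x : E) (h : H), ∃ h' : H, star (t x) (V h) = V h') :
    (∀ (a : A) (h : H), π a (V h) = V (π₀ a h)) ∧
    (∀ (x : E) (h : H), t x (V h) = V (t₀ x h)) ∧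
    (∀ (a : A) (k : K), (∀ h : H, ⟪V h, k⟫_ℂ = 0) → ∀ h : H, ⟪V h, π a k⟫_ℂ = 0) ∧
    (∀ (x : E) (k : K), (∀ h : H, ⟪V h, k⟫_ℂ = 0) → ∀ h : H, ⟪V h, t x k⟫_ℂ = 0) := by
  refine ⟨fun a => apply_eq_of_compression_star_mul_self V (π a) (π₀ a) (hπ₀ a) ?_,
    fun x => apply_eq_of_compression_star_mul_self V (t x) (t₀ x) (ht₀ x) ?_,
    fun a k hk => inner_apply_eq_zero_of_star_apply_mem (π a) V (hco_π a) hk,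
    fun x k hk => inner_apply_eq_zero_of_star_apply_mem (t x) V (hco_t x) hk⟩
  · rw [← map_star, ← map_mul, ← map_star, ← map_mul]
    exact (hπ₀ _).symm
  · rw [hrigged.2, hrigged₀.2]
    exact (hπ₀ _).symm
end

section
/- Let G = (V, E) be a row-finite directed graph, and realize the Toeplitz graph algebra T(G) as the C*-algebra generated by the left regular Toeplitz-Cuntz-Krieger family (L_v, L_e) on ℓ²(E•). Then the ideal I_G generated by {L_v − Σ_{e ∈ r^{-1}(v)} L_e L_e* : v ∈ V} equals ⊕_{v∈V} K(H_{G,v}) and is the minimum essential ideal of T(G): it is essential, and it is contained in every essential ideal of T(G). -/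
open Classical

/-- A finite path in a directed graph `G = (V, Edg, r, s)`: a source vertex `base`
together with a composable list of edges `e₁ e₂ ⋯ e_k` (with `s eᵢ = r eᵢ₊₁` and the
source of the last edge equal to `base`); the empty list represents the trivial path at
`base`. -/
structure GPath (V Edg : Type*) (r s : Edg → V) where
  base : V
  edges : List Edg
  chain : edges.Chain' fun e f => s e = r f
  last_src : ∀ e ∈ edges.getLast?, s e = base

/-- The range vertex of a finite path. -/
def GPath.range {V Edg : Type*} {r s : Edg → V} (p : GPath V Edg r s) : V :=
  match p.edges with
  | [] => p.base
  | e :: _ => r e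

variable {V Edg : Type*} {r s : Edg → V}

/-- `(Lv, Le)` is the left regular Toeplitz–Cuntz–Krieger family of the graph on
`ℓ²` of the finite paths: `Lv v` is the projection onto paths with range `v`, and
`Le e` prepends the edge `e` to composable paths (and kills the rest). -/
def IsLeftRegularTCK (Lv : V → (lp (fun _ : GPath V Edg r s => ℂ) 2 →L[ℂ]
      lp (fun _ : GPath V Edg r s => ℂ) 2))
    (Le : Edg → (lp (fun _ : GPath V Edg r s => ℂ) 2 →L[ℂ]
      lp (fun _ : GPath V Edg r s => ℂ) 2)) : Prop :=
  (∀ (v : V) (p : GPath V Edg r s), Lv v (lp.single 2 p 1) =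
    if p.range = v then lp.single 2 p 1 else 0) ∧
  (∀ (e : Edg) (p q : GPath V Edg r s), q.base = p.base → q.edges = e :: p.edges →
    Le e (lp.single 2 p 1) = if p.range = s e then lp.single 2 q 1 else 0) ∧
  (∀ (e : Edg) (p : GPath V Edg r s), p.range ≠ s e → Le e (lp.single 2 p 1) = 0)

/-- The Toeplitz graph C*-algebra `T(G) = C*(Lv, Le) ⊆ B(ℓ²(E•))`. -/
def toeplitzGraphAlgebra (Lv : V → (lp (fun _ : GPath V Edg r s => ℂ) 2 →L[ℂ]
      lp (fun _ : GPath V Edg r s => ℂ) 2))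
    (Le : Edg → (lp (fun _ : GPath V Edg r s => ℂ) 2 →L[ℂ]
      lp (fun _ : GPath V Edg r s => ℂ) 2)) :
    Set (lp (fun _ : GPath V Edg r s => ℂ) 2 →L[ℂ] lp (fun _ : GPath V Edg r s => ℂ) 2) :=
  ((NonUnitalStarAlgebra.adjoin ℂ (Set.range Lv ∪ Set.range Le)).topologicalClosure :
    NonUnitalStarSubalgebra ℂ _)

/-- The reducing subspace `H_{G,v}`: the closed span of the basis vectors `ξ_λ` indexed
by paths `λ` with source `v`. -/
def pathSpace (V Edg : Type*) (r s : Edg → V) (v : V) :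
    Set (lp (fun _ : GPath V Edg r s => ℂ) 2) :=
  ((Submodule.span ℂ {f : lp (fun _ : GPath V Edg r s => ℂ) 2 | ∃ p : GPath V Edg r s,
    p.base = v ∧ f = lp.single 2 p 1}).topologicalClosure : Submodule ℂ _)

/-- A closed two-sided ideal of the (concretely represented) C*-algebra `TG`. -/
def IsClosedIdealOf {H : Type*} [NormedAddCommGroup H] [InnerProductSpace ℂ H]
    [CompleteSpace H] (TG J : Set (H →L[ℂ] H)) : Prop :=
  J ⊆ TG ∧ IsClosed J ∧ (0 : H →L[ℂ] H) ∈ J ∧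
  (∀ x ∈ J, ∀ y ∈ J, x + y ∈ J) ∧ (∀ (c : ℂ), ∀ x ∈ J, c • x ∈ J) ∧
  (∀ x ∈ TG, ∀ y ∈ J, x * y ∈ J ∧ y * x ∈ J)

/-!
Every element of `T(G)` maps each `H_{G,v}` into itself, and the gap projection at `v` is the
rank-one projection onto `ℂ ξ_v`. Since `L_λ ξ_v = ξ_λ` for each path `λ` with source `v`, every
matrix unit `θ_{λ,μ} = ξ_λ ⊗ ξ_μ*` with `s(λ) = s(μ) = v` factors as `L_λ (gap at v) L_μ*`; so
`T(G)`, and every ideal containing the gaps, contains these matrix units, whose closed span is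
`⊕_v K(H_{G,v})`. Conversely a compact `T ∈ T(G)` is the norm limit of `P_F T` for the finite
coordinate projections `P_F`, and `P_F T = Σ_{λ ∈ F} θ(ξ_λ, T* ξ_λ)` lies in that span.
If `y ≠ 0` lies in an ideal, then `y ξ_λ ≠ 0` for some `λ` and `y θ_{λ,λ}` is a nonzero compact
element of the ideal. An essential ideal meets the ideal `K(H_{G,v})` in some `x ≠ 0`, and
compressing `x` between two matrix units recovers every matrix unit over `v` up to a nonzero scalar.
-/

open Filter Topology Set
open scoped InnerProductSpace lp
open InnerProductSpace (rankOne)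

noncomputable section

theorem Submodule.mapsTo_topologicalClosure_span {𝕜 𝕜₂ E F : Type*} [NormedField 𝕜]
    [NormedField 𝕜₂] [NormedAddCommGroup E] [NormedSpace 𝕜 E] [NormedAddCommGroup F]
    [NormedSpace 𝕜₂ F] {σ : 𝕜 →+* 𝕜₂} (Φ : E →SL[σ] F) {S : Set E} {N : Submodule 𝕜₂ F}
    (hN : IsClosed (N : Set F)) (hS : MapsTo Φ S N) :
    MapsTo Φ (span 𝕜 S).topologicalClosure N :=
  topologicalClosure_minimal (span 𝕜 S) (t := N.comap (Φ : E →ₛₗ[σ] F)) (span_le.2 hS)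
    (hN.preimage Φ.continuous)

theorem InnerProductSpace.isCompactOperator_rankOne {𝕜 E F : Type*} [RCLike 𝕜]
    [NormedAddCommGroup E] [NormedSpace 𝕜 E] [NormedAddCommGroup F] [InnerProductSpace 𝕜 F]
    (x : E) (y : F) : IsCompactOperator (rankOne 𝕜 x y) :=
  (isCompactOperator_of_locallyCompactSpace_rng
    (ContinuousLinearMap.toSpanSingleton 𝕜 x)).comp_clm (innerSL 𝕜 y)

theorem IsCompactOperator.tendsto_mul_of_tendsto_apply {𝕜 E α : Type*} [RCLike 𝕜]
    [NormedAddCommGroup E] [NormedSpace 𝕜 E] {l : Filter α} {Q : α → E →L[𝕜] E}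
    (hQ : ∀ a, ‖Q a‖ ≤ 1) (hQx : ∀ x, Tendsto (fun a => Q a x) l (𝓝 0)) {T : E →L[𝕜] E}
    (hT : IsCompactOperator T) : Tendsto (fun a => Q a * T) l (𝓝 0) := by
  rw [Metric.tendsto_nhds]
  intro ε hε
  obtain ⟨K, hK, hTK⟩ := hT.image_closedBall_subset_compact (𝕜₁ := 𝕜) 1
  obtain ⟨t, ht, hKt⟩ := Metric.totallyBounded_iff.1 hK.totallyBounded (ε / 3) (by positivity)
  have hsmall : ∀ᶠ a in l, ∀ y ∈ t, ‖Q a y‖ < ε / 3 :=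
    (eventually_all_finite ht).2 fun y _ =>
      (Metric.tendsto_nhds.1 (hQx y) (ε / 3) (by positivity)).mono fun a h => by
        rwa [dist_zero_right] at h
  filter_upwards [hsmall] with a ha
  rw [dist_zero_right]
  refine lt_of_le_of_lt (ContinuousLinearMap.opNorm_le_of_unit_norm (by positivity)
    fun x hx => ?_) (by linarith : 2 * (ε / 3) < ε)
  obtain ⟨y, hy, hxy⟩ := mem_iUnion₂.1
    (hKt (hTK ⟨x, by simp [hx], rfl⟩))
  rw [Metric.mem_ball, dist_eq_norm] at hxy
  calc ‖(Q a * T) x‖ = ‖Q a (T x - y) + Q a y‖ := by simp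
    _ ≤ ‖Q a‖ * ‖T x - y‖ + ‖Q a y‖ := (norm_add_le _ _).trans (by gcongr; exact (Q a).le_opNorm _)
    _ ≤ 1 * (ε / 3) + ε / 3 := by gcongr; exacts [hQ a, hxy.le, (ha y hy).le]
    _ = 2 * (ε / 3) := by ring

namespace IsClosedIdealOf

variable {H : Type*} [NormedAddCommGroup H] [InnerProductSpace ℂ H] [CompleteSpace H]
  {TG J : Set (H →L[ℂ] H)}

def toSubmodule (hJ : IsClosedIdealOf TG J) : Submodule ℂ (H →L[ℂ] H) where
  carrier := J
  add_mem' ha hb := hJ.2.2.2.1 _ ha _ hb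
  zero_mem' := hJ.2.2.1
  smul_mem' := hJ.2.2.2.2.1

theorem topologicalClosure_span_subset (hJ : IsClosedIdealOf TG J) {X : Set (H →L[ℂ] H)}
    (hX : X ⊆ J) : ((Submodule.span ℂ X).topologicalClosure : Set (H →L[ℂ] H)) ⊆ J :=
  Submodule.topologicalClosure_minimal (t := hJ.toSubmodule) _ (Submodule.span_le.2 hX) hJ.2.1

theorem smul_mem (hJ : IsClosedIdealOf TG J) (c : ℂ) {x : H →L[ℂ] H} (hx : x ∈ J) :
    c • x ∈ J :=
  hJ.2.2.2.2.1 c x hx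

theorem mul_mem_left (hJ : IsClosedIdealOf TG J) {a x : H →L[ℂ] H} (ha : a ∈ TG) (hx : x ∈ J) :
    a * x ∈ J :=
  (hJ.2.2.2.2.2 a ha x hx).1

theorem mul_mem_right (hJ : IsClosedIdealOf TG J) {a x : H →L[ℂ] H} (ha : a ∈ TG) (hx : x ∈ J) :
    x * a ∈ J :=
  (hJ.2.2.2.2.2 a ha x hx).2

end IsClosedIdealOf

theorem isClosedIdealOf_topologicalClosure_span {H : Type*} [NormedAddCommGroup H]
    [InnerProductSpace ℂ H] [CompleteSpace H] {A : NonUnitalSubalgebra ℂ (H →L[ℂ] H)}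
    (hA : IsClosed (A : Set (H →L[ℂ] H))) {X : Set (H →L[ℂ] H)} (hXA : X ⊆ A)
    (hmul : ∀ a ∈ A, ∀ x ∈ X, a * x ∈ (Submodule.span ℂ X).topologicalClosure ∧
      x * a ∈ (Submodule.span ℂ X).topologicalClosure) :
    IsClosedIdealOf (A : Set (H →L[ℂ] H))
      ((Submodule.span ℂ X).topologicalClosure : Set (H →L[ℂ] H)) := by
  set N := (Submodule.span ℂ X).topologicalClosure
  have hN : IsClosed (N : Set (H →L[ℂ] H)) := Submodule.isClosed_topologicalClosure _
  refine ⟨Submodule.topologicalClosure_minimal (t := A.toSubmodule) _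
    (Submodule.span_le.2 hXA) hA, hN, N.zero_mem, fun _ hx _ hy => N.add_mem hx hy,
    fun c _ hx => N.smul_mem c hx, fun a ha y hy => ⟨?_, ?_⟩⟩
  · exact Submodule.mapsTo_topologicalClosure_span (ContinuousLinearMap.mul ℂ _ a) hN
      (fun x hx => (hmul a ha x hx).1) hy
  · exact Submodule.mapsTo_topologicalClosure_span ((ContinuousLinearMap.mul ℂ _).flip a) hN
      (fun x hx => by simpa using (hmul a ha x hx).2) hy

section EllTwo

variable {ι : Type*}

def ξ (i : ι) : ℓ²(ι, ℂ) := lp.single 2 i 1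

theorem ξ_apply (i j : ι) : ξ i j = if j = i then 1 else 0 := by
  simp [ξ, lp.single_apply, Pi.single_apply]

theorem ξ_ne_zero (i : ι) : ξ i ≠ 0 := fun h => by
  simpa [ξ_apply] using congrArg (fun x : ℓ²(ι, ℂ) => x i) h

theorem inner_ξ_left (i : ι) (x : ℓ²(ι, ℂ)) : ⟪ξ i, x⟫_ℂ = x i := by
  simp [ξ, lp.inner_single_left]

theorem rankOne_ξ_apply_ξ (i j k : ι) :
    rankOne ℂ (ξ i) (ξ j) (ξ k) = if j = k then ξ i else 0 := by
  rw [InnerProductSpace.rankOne_apply, inner_ξ_left, ξ_apply]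
  split_ifs <;> simp

theorem continuousLinearMap_ext_ξ {T S : ℓ²(ι, ℂ) →L[ℂ] ℓ²(ι, ℂ)}
    (h : ∀ i, T (ξ i) = S (ξ i)) : T = S :=
  lp.ext_continuousLinearMap (by norm_num) fun i => ContinuousLinearMap.ext_ring (h i)

theorem exists_apply_ξ_ne_zero {T : ℓ²(ι, ℂ) →L[ℂ] ℓ²(ι, ℂ)} (hT : T ≠ 0) :
    ∃ i, T (ξ i) ≠ 0 := by
  contrapose! hT
  exact continuousLinearMap_ext_ξ fun i => by simpa using hT i

theorem lp.exists_apply_ne_zero {x : ℓ²(ι, ℂ)} (hx : x ≠ 0) : ∃ i, x i ≠ 0 := by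
  contrapose! hx
  exact lp.ext (funext hx)

def diagProj (F : Finset ι) : ℓ²(ι, ℂ) →L[ℂ] ℓ²(ι, ℂ) := ∑ i ∈ F, rankOne ℂ (ξ i) (ξ i)

theorem diagProj_apply (F : Finset ι) (x : ℓ²(ι, ℂ)) :
    diagProj F x = ∑ i ∈ F, lp.single 2 i (x i) := by
  simp only [diagProj, FunLike.coe_sum, Finset.sum_apply, InnerProductSpace.rankOne_apply,
    inner_ξ_left]
  simp [ξ, ← lp.single_smul]

theorem norm_sub_diagProj_apply_le (F : Finset ι) (x : ℓ²(ι, ℂ)) :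
    ‖x - diagProj F x‖ ≤ ‖x‖ := by
  refine lp.norm_mono two_ne_zero fun i => ?_
  simp only [diagProj_apply, lp.coeFn_sub, lp.coeFn_sum, lp.coeFn_single, Pi.sub_apply,
    Finset.sum_apply, Finset.sum_pi_single]
  split_ifs <;> simp

theorem IsCompactOperator.tendsto_diagProj_mul {T : ℓ²(ι, ℂ) →L[ℂ] ℓ²(ι, ℂ)}
    (hT : IsCompactOperator T) : Tendsto (fun F => diagProj F * T) atTop (𝓝 T) := by
  have hQ : ∀ F : Finset ι, ‖1 - diagProj F‖ ≤ 1 := fun F =>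
    ContinuousLinearMap.opNorm_le_bound _ zero_le_one fun x => by
      simpa using norm_sub_diagProj_apply_le F x
  have hQx (x : ℓ²(ι, ℂ)) : Tendsto (fun F => (1 - diagProj F) x) atTop (𝓝 0) := by
    simpa [diagProj_apply] using (lp.hasSum_single (by norm_num) x).const_sub x
  simpa [sub_mul] using (hT.tendsto_mul_of_tendsto_apply hQ hQx).const_sub T

end EllTwo

section Blocks

variable {ι κ : Type*} (β : ι → κ)

def blockSpace (v : κ) : Submodule ℂ ℓ²(ι, ℂ) :=
  (Submodule.span ℂ {f : ℓ²(ι, ℂ) | ∃ i, β i = v ∧ f = lp.single 2 i 1}).topologicalClosure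

variable {β}

theorem isClosed_blockSpace (v : κ) : IsClosed (blockSpace β v : Set ℓ²(ι, ℂ)) :=
  Submodule.isClosed_topologicalClosure _

theorem ξ_mem_blockSpace {i : ι} {v : κ} (h : β i = v) : ξ i ∈ blockSpace β v :=
  Submodule.le_topologicalClosure _ (Submodule.subset_span ⟨i, h, rfl⟩)

theorem mapsTo_blockSpace {σ : ℂ →+* ℂ} {F : Type*} [NormedAddCommGroup F] [NormedSpace ℂ F]
    (Φ : ℓ²(ι, ℂ) →SL[σ] F) {v : κ} {N : Submodule ℂ F} (hN : IsClosed (N : Set F))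
    (h : ∀ i, β i = v → Φ (ξ i) ∈ N) : MapsTo Φ (blockSpace β v) N :=
  Submodule.mapsTo_topologicalClosure_span Φ hN fun _ ⟨i, hi, hf⟩ => hf ▸ h i hi

theorem mem_blockSpace_iff {v : κ} {x : ℓ²(ι, ℂ)} :
    x ∈ blockSpace β v ↔ ∀ i, β i ≠ v → x i = 0 := by
  constructor
  · intro hx i hi
    have : ∀ j, β j = v → innerSL ℂ (ξ i) (ξ j) ∈ (⊥ : Submodule ℂ ℂ) := fun j hj => by
      simp [inner_ξ_left, ξ_apply, show i ≠ j by rintro rfl; exact hi hj]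
    simpa [inner_ξ_left] using mapsTo_blockSpace (innerSL ℂ (ξ i)) (by simp) this hx
  · intro hx
    refine (isClosed_blockSpace v).mem_of_tendsto (lp.hasSum_single (by norm_num) x)
      (Eventually.of_forall fun F => Submodule.sum_mem _ fun i _ => ?_)
    by_cases hi : β i = v
    · simpa [ξ, ← lp.single_smul] using (blockSpace β v).smul_mem (x i) (ξ_mem_blockSpace hi)
    · simp [hx i hi]

theorem mapsTo_blockSpace_of_apply_ξ {T : ℓ²(ι, ℂ) →L[ℂ] ℓ²(ι, ℂ)}
    (hT : ∀ i, T (ξ i) ∈ blockSpace β (β i)) (v : κ) :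
    MapsTo T (blockSpace β v) (blockSpace β v) :=
  mapsTo_blockSpace T (isClosed_blockSpace v) fun i hi => hi ▸ hT i

variable (β) in
def blockDiagonal : NonUnitalStarSubalgebra ℂ (ℓ²(ι, ℂ) →L[ℂ] ℓ²(ι, ℂ)) where
  carrier := {T | ∀ i, T (ξ i) ∈ blockSpace β (β i)}
  add_mem' hS hT i := add_mem (hS i) (hT i)
  zero_mem' _ := zero_mem _
  mul_mem' hS hT i := mapsTo_blockSpace_of_apply_ξ hS _ (hT i)
  smul_mem' c _ hT i := Submodule.smul_mem _ c (hT i)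
  star_mem' {T} hT i := by
    refine mem_blockSpace_iff.2 fun j hj => ?_
    have hTj : T (ξ j) i = 0 := mem_blockSpace_iff.1 (hT j) i (Ne.symm hj)
    rw [← inner_ξ_left, ContinuousLinearMap.star_eq_adjoint,
      ContinuousLinearMap.adjoint_inner_right, ← inner_conj_symm, inner_ξ_left, hTj, map_zero]

theorem mem_blockDiagonal {T : ℓ²(ι, ℂ) →L[ℂ] ℓ²(ι, ℂ)} :
    T ∈ blockDiagonal β ↔ ∀ i, T (ξ i) ∈ blockSpace β (β i) :=
  Iff.rfl

theorem isClosed_blockDiagonal : IsClosed (blockDiagonal β : Set (ℓ²(ι, ℂ) →L[ℂ] ℓ²(ι, ℂ))) := by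
  have : (blockDiagonal β : Set (ℓ²(ι, ℂ) →L[ℂ] ℓ²(ι, ℂ))) =
      ⋂ i, (fun T => T (ξ i)) ⁻¹' blockSpace β (β i) := by
    ext T; simp only [SetLike.mem_coe, mem_blockDiagonal, mem_iInter, mem_preimage]
  rw [this]
  exact isClosed_iInter fun i =>
    (isClosed_blockSpace _).preimage (ContinuousLinearMap.apply ℂ _ (ξ i)).continuous

theorem mapsTo_blockSpace_of_mem_blockDiagonal {T : ℓ²(ι, ℂ) →L[ℂ] ℓ²(ι, ℂ)}
    (hT : T ∈ blockDiagonal β) (v : κ) : MapsTo T (blockSpace β v) (blockSpace β v) :=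
  mapsTo_blockSpace_of_apply_ξ hT v

variable (β) in
def blockMatrixUnits (v : κ) : Set (ℓ²(ι, ℂ) →L[ℂ] ℓ²(ι, ℂ)) :=
  {A | ∃ i j, β i = v ∧ β j = v ∧ A = rankOne ℂ (ξ i) (ξ j)}

variable (β) in
/-- `K(H_v)`, realized inside `B(ℓ²(ι))`. -/
def blockCompacts (v : κ) : Submodule ℂ (ℓ²(ι, ℂ) →L[ℂ] ℓ²(ι, ℂ)) :=
  (Submodule.span ℂ (blockMatrixUnits β v)).topologicalClosure

variable (β) in
/-- `⊕_v K(H_v)`, realized inside `B(ℓ²(ι))`. -/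
def blockDiagCompacts : Submodule ℂ (ℓ²(ι, ℂ) →L[ℂ] ℓ²(ι, ℂ)) :=
  (Submodule.span ℂ (⋃ v, blockMatrixUnits β v)).topologicalClosure

theorem blockCompacts_le_blockDiagCompacts (v : κ) :
    blockCompacts β v ≤ blockDiagCompacts β :=
  Submodule.topologicalClosure_mono (Submodule.span_mono (subset_iUnion _ v))

theorem rankOne_mem_blockCompacts {v : κ} {x y : ℓ²(ι, ℂ)} (hx : x ∈ blockSpace β v)
    (hy : y ∈ blockSpace β v) : rankOne ℂ x y ∈ blockCompacts β v := by
  have hN := Submodule.isClosed_topologicalClosure (Submodule.span ℂ (blockMatrixUnits β v))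
  have hξ : ∀ j, β j = v → rankOne ℂ x (ξ j) ∈ blockCompacts β v := fun j hj => by
    have := mapsTo_blockSpace ((rankOne ℂ).flip (ξ j)) hN (fun i hi => by
      rw [ContinuousLinearMap.flip_apply]
      exact Submodule.le_topologicalClosure _ (Submodule.subset_span ⟨i, j, hi, hj, rfl⟩)) hx
    rwa [ContinuousLinearMap.flip_apply] at this
  exact mapsTo_blockSpace (rankOne ℂ x) hN hξ hy

theorem isCompactOperator_of_mem_blockDiagCompacts {T : ℓ²(ι, ℂ) →L[ℂ] ℓ²(ι, ℂ)}
    (hT : T ∈ blockDiagCompacts β) : IsCompactOperator T := by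
  refine Submodule.topologicalClosure_minimal
    (t := compactOperator (RingHom.id ℂ) ℓ²(ι, ℂ) ℓ²(ι, ℂ)) _ (Submodule.span_le.2 ?_)
    (isClosed_setOfPred_isCompactOperator (𝕜₁ := ℂ) (σ₁₂ := RingHom.id ℂ) (M₁ := ℓ²(ι, ℂ))
      (M₂ := ℓ²(ι, ℂ))) hT
  rintro _ ⟨_, ⟨v, rfl⟩, i, j, -, -, rfl⟩
  exact InnerProductSpace.isCompactOperator_rankOne _ _

theorem mem_blockDiagCompacts_of_isCompactOperator {T : ℓ²(ι, ℂ) →L[ℂ] ℓ²(ι, ℂ)}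
    (hT : IsCompactOperator T) (hstar : star T ∈ blockDiagonal β) :
    T ∈ blockDiagCompacts β := by
  refine (Submodule.isClosed_topologicalClosure _).mem_of_tendsto hT.tendsto_diagProj_mul
    (Eventually.of_forall fun F => ?_)
  rw [SetLike.mem_coe, diagProj, Finset.sum_mul]
  refine Submodule.sum_mem _ fun i _ => ?_
  rw [ContinuousLinearMap.mul_def, InnerProductSpace.rankOne_comp,
    ← ContinuousLinearMap.star_eq_adjoint]
  exact blockCompacts_le_blockDiagCompacts _
    (rankOne_mem_blockCompacts (ξ_mem_blockSpace rfl) (hstar i))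

end Blocks

section BlockAlgebra

variable {ι κ : Type*} {β : ι → κ}

theorem index_eq_of_mem_blockCompacts {v : κ} {x : ℓ²(ι, ℂ) →L[ℂ] ℓ²(ι, ℂ)}
    (hx : x ∈ blockCompacts β v) {k l : ι} (hkl : x (ξ k) l ≠ 0) : β k = v ∧ β l = v := by
  by_contra hne
  let Φ : (ℓ²(ι, ℂ) →L[ℂ] ℓ²(ι, ℂ)) →L[ℂ] ℂ :=
    (innerSL ℂ (ξ l)).comp (ContinuousLinearMap.apply ℂ _ (ξ k))
  have hΦ : MapsTo Φ (blockMatrixUnits β v) (⊥ : Submodule ℂ ℂ) := by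
    rintro _ ⟨i, j, hi, hj, rfl⟩
    simp only [SetLike.mem_coe, Submodule.mem_bot, Φ, ContinuousLinearMap.comp_apply,
      ContinuousLinearMap.apply_apply, innerSL_apply_apply, rankOne_ξ_apply_ξ]
    split_ifs with hjk
    · rw [inner_ξ_left, ξ_apply, if_neg]
      rintro rfl
      exact hne ⟨hjk ▸ hj, hi⟩
    · exact inner_zero_right _
  exact hkl (by simpa [Φ, inner_ξ_left] using
    Submodule.mapsTo_topologicalClosure_span Φ (by simp) hΦ hx)

theorem blockDiagCompacts_subset {TG J : Set (ℓ²(ι, ℂ) →L[ℂ] ℓ²(ι, ℂ))}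
    (hJ : IsClosedIdealOf TG J) (hunits : ∀ v, blockMatrixUnits β v ⊆ J) :
    (blockDiagCompacts β : Set (ℓ²(ι, ℂ) →L[ℂ] ℓ²(ι, ℂ))) ⊆ J :=
  hJ.topologicalClosure_span_subset (iUnion_subset hunits)

theorem mul_mem_blockCompacts_of_mem_blockMatrixUnits {a u : ℓ²(ι, ℂ) →L[ℂ] ℓ²(ι, ℂ)}
    (ha : a ∈ blockDiagonal β) {v : κ} (hu : u ∈ blockMatrixUnits β v) :
    a * u ∈ blockCompacts β v ∧ u * a ∈ blockCompacts β v := by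
  obtain ⟨i, j, hi, hj, rfl⟩ := hu
  rw [ContinuousLinearMap.mul_def, ContinuousLinearMap.mul_def, InnerProductSpace.comp_rankOne,
    InnerProductSpace.rankOne_comp, ← ContinuousLinearMap.star_eq_adjoint]
  exact ⟨rankOne_mem_blockCompacts (mapsTo_blockSpace_of_mem_blockDiagonal ha v
      (ξ_mem_blockSpace hi)) (ξ_mem_blockSpace hj),
    rankOne_mem_blockCompacts (ξ_mem_blockSpace hi)
      (mapsTo_blockSpace_of_mem_blockDiagonal (star_mem ha) v (ξ_mem_blockSpace hj))⟩

variable {A : NonUnitalStarSubalgebra ℂ (ℓ²(ι, ℂ) →L[ℂ] ℓ²(ι, ℂ))}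
  (hA : IsClosed (A : Set (ℓ²(ι, ℂ) →L[ℂ] ℓ²(ι, ℂ)))) (hAβ : A ≤ blockDiagonal β)
  (hunits : ∀ i j, β i = β j → rankOne ℂ (ξ i) (ξ j) ∈ A)

include hunits in
theorem blockMatrixUnits_subset (v : κ) : blockMatrixUnits β v ⊆ A := by
  rintro _ ⟨i, j, hi, hj, rfl⟩
  exact hunits i j (hi.trans hj.symm)

include hA hAβ hunits

theorem isClosedIdealOf_blockCompacts (v : κ) :
    IsClosedIdealOf (A : Set (ℓ²(ι, ℂ) →L[ℂ] ℓ²(ι, ℂ)))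
      (blockCompacts β v : Set (ℓ²(ι, ℂ) →L[ℂ] ℓ²(ι, ℂ))) :=
  isClosedIdealOf_topologicalClosure_span (A := A.toNonUnitalSubalgebra) hA
    (blockMatrixUnits_subset hunits v)
    fun _ ha _ hu => mul_mem_blockCompacts_of_mem_blockMatrixUnits (hAβ ha) hu

theorem isClosedIdealOf_blockDiagCompacts :
    IsClosedIdealOf (A : Set (ℓ²(ι, ℂ) →L[ℂ] ℓ²(ι, ℂ)))
      (blockDiagCompacts β : Set (ℓ²(ι, ℂ) →L[ℂ] ℓ²(ι, ℂ))) := by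
  refine isClosedIdealOf_topologicalClosure_span (A := A.toNonUnitalSubalgebra) hA
    (iUnion_subset (blockMatrixUnits_subset hunits)) fun a ha u hu => ?_
  obtain ⟨v, hu⟩ := mem_iUnion.1 hu
  exact (mul_mem_blockCompacts_of_mem_blockMatrixUnits (hAβ ha) hu).imp
    (blockCompacts_le_blockDiagCompacts v ·) (blockCompacts_le_blockDiagCompacts v ·)

theorem mem_blockDiagCompacts_iff {T : ℓ²(ι, ℂ) →L[ℂ] ℓ²(ι, ℂ)} :
    T ∈ blockDiagCompacts β ↔ T ∈ A ∧ IsCompactOperator T :=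
  ⟨fun hT => ⟨(isClosedIdealOf_blockDiagCompacts hA hAβ hunits).1 hT,
      isCompactOperator_of_mem_blockDiagCompacts hT⟩,
    fun hT => mem_blockDiagCompacts_of_isCompactOperator hT.2 (hAβ (star_mem hT.1))⟩

omit hA in
theorem exists_ne_zero_mem_blockDiagCompacts_inter {J : Set (ℓ²(ι, ℂ) →L[ℂ] ℓ²(ι, ℂ))}
    (hJ : IsClosedIdealOf (A : Set (ℓ²(ι, ℂ) →L[ℂ] ℓ²(ι, ℂ))) J) {y : ℓ²(ι, ℂ) →L[ℂ] ℓ²(ι, ℂ)}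
    (hyJ : y ∈ J) (hy : y ≠ 0) : ∃ x, x ∈ (blockDiagCompacts β : Set _) ∩ J ∧ x ≠ 0 := by
  obtain ⟨i, hi⟩ := exists_apply_ξ_ne_zero hy
  refine ⟨y * rankOne ℂ (ξ i) (ξ i), ⟨?_, hJ.mul_mem_right (hunits i i rfl) hyJ⟩, ?_⟩
  · exact blockCompacts_le_blockDiagCompacts _
      (mul_mem_blockCompacts_of_mem_blockMatrixUnits (hAβ (hJ.1 hyJ)) ⟨i, i, rfl, rfl, rfl⟩).1
  · rw [ContinuousLinearMap.mul_def, InnerProductSpace.comp_rankOne]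
    exact InnerProductSpace.rankOne_ne_zero hi (ξ_ne_zero i)

theorem blockMatrixUnits_subset_of_essential {J : Set (ℓ²(ι, ℂ) →L[ℂ] ℓ²(ι, ℂ))}
    (hJ : IsClosedIdealOf (A : Set (ℓ²(ι, ℂ) →L[ℂ] ℓ²(ι, ℂ))) J)
    (hess : ∀ J', IsClosedIdealOf (A : Set (ℓ²(ι, ℂ) →L[ℂ] ℓ²(ι, ℂ))) J' →
      (∃ y ∈ J', y ≠ 0) → ∃ x, x ∈ J ∩ J' ∧ x ≠ 0) (v : κ) :
    blockMatrixUnits β v ⊆ J := by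
  rintro _ ⟨i, j, hi, hj, rfl⟩
  obtain ⟨x, ⟨hxJ, hxK⟩, hx⟩ := hess _ (isClosedIdealOf_blockCompacts hA hAβ hunits v)
    ⟨_, Submodule.le_topologicalClosure _ (Submodule.subset_span ⟨i, i, hi, hi, rfl⟩),
      InnerProductSpace.rankOne_ne_zero (ξ_ne_zero i) (ξ_ne_zero i)⟩
  obtain ⟨k, hk⟩ := exists_apply_ξ_ne_zero hx
  obtain ⟨l, hl⟩ := lp.exists_apply_ne_zero hk
  obtain ⟨hkv, hlv⟩ := index_eq_of_mem_blockCompacts hxK hl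
  have hcompress : rankOne ℂ (ξ i) (ξ l) * x * rankOne ℂ (ξ k) (ξ j) =
      x (ξ k) l • rankOne ℂ (ξ i) (ξ j) := by
    rw [mul_assoc, ContinuousLinearMap.mul_def, ContinuousLinearMap.mul_def,
      InnerProductSpace.comp_rankOne, InnerProductSpace.rankOne_comp_rankOne, inner_ξ_left]
  have hmem := hJ.mul_mem_right (hunits k j (hkv.trans hj.symm))
    (hJ.mul_mem_left (hunits i l (hi.trans hlv.symm)) hxJ)
  rw [hcompress] at hmem
  simpa [hl] using hJ.smul_mem (x (ξ k) l)⁻¹ hmem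

end BlockAlgebra

attribute [ext] GPath

namespace GPath

def vertex (v : V) : GPath V Edg r s := ⟨v, [], List.isChain_nil, by simp⟩

@[simp] theorem vertex_range (v : V) : (vertex v : GPath V Edg r s).range = v := rfl

theorem range_eq_base {p : GPath V Edg r s} (h : p.edges = []) : p.range = p.base := by
  simp [range, h]

theorem range_eq_of_head? {p : GPath V Edg r s} {e : Edg} (h : p.edges.head? = some e) :
    p.range = r e := by
  cases hp : p.edges <;> simp_all [range]

def cons (e : Edg) (p : GPath V Edg r s) (h : p.range = s e) : GPath V Edg r s where
  base := p.base
  edges := e :: p.edges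
  chain := List.isChain_cons.2 ⟨fun _ hf => h.symm.trans (range_eq_of_head? hf), p.chain⟩
  last_src f hf := by
    cases hp : p.edges with
    | nil =>
      simp only [hp, List.getLast?_singleton, Option.mem_def, Option.some.injEq] at hf
      rw [← hf, ← h, range_eq_base hp]
    | cons a t =>
      rw [hp, List.getLast?_cons_cons] at hf
      exact p.last_src f (hp ▸ hf)

def tail (q : GPath V Edg r s) : GPath V Edg r s where
  base := q.base
  edges := q.edges.tail
  chain := q.chain.tail
  last_src f hf := by
    cases hq : q.edges with
    | nil => simp [hq] at hf
    | cons a t =>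
      cases t with
      | nil => simp [hq] at hf
      | cons b t => exact q.last_src f (by rw [hq, List.getLast?_cons_cons]; simpa [hq] using hf)

@[simp] theorem cons_edges (e : Edg) (p : GPath V Edg r s) (h : p.range = s e) :
    (p.cons e h).edges = e :: p.edges := rfl

@[simp] theorem tail_base (q : GPath V Edg r s) : q.tail.base = q.base := rfl

@[simp] theorem tail_edges (q : GPath V Edg r s) : q.tail.edges = q.edges.tail := rfl

theorem range_tail {q : GPath V Edg r s} {e : Edg} (hq : q.edges.head? = some e) :
    q.tail.range = s e := by
  obtain ⟨l, hl⟩ := List.head?_eq_some_iff.1 hq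
  cases l with
  | nil =>
    rw [range_eq_base (by simp [hl]), tail_base]
    exact (q.last_src e (by simp [hl])).symm
  | cons f l =>
    have hc := q.chain
    rw [hl, List.Chain', List.isChain_cons_cons] at hc
    rw [range_eq_of_head? (e := f) (by simp [hl])]
    exact hc.1.symm

theorem cons_tail {q : GPath V Edg r s} {e : Edg} (hq : q.edges.head? = some e) :
    q.tail.cons e (range_tail hq) = q := by
  obtain ⟨l, hl⟩ := List.head?_eq_some_iff.1 hq
  ext1
  · rfl
  · simp [hl]

theorem cons_eq_iff {e : Edg} {p q : GPath V Edg r s} (h : p.range = s e) :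
    p.cons e h = q ↔ q.edges.head? = some e ∧ q.tail = p := by
  constructor
  · rintro rfl
    exact ⟨rfl, rfl⟩
  · rintro ⟨hq, rfl⟩
    exact cons_tail hq

theorem eq_vertex_iff {p : GPath V Edg r s} {v : V} : p = vertex v ↔ p.edges = [] ∧ p.base = v :=
  ⟨by rintro rfl; exact ⟨rfl, rfl⟩, fun ⟨he, hb⟩ => GPath.ext hb he⟩

end GPath

section LeftRegular

variable {Lv : V → (ℓ²(GPath V Edg r s, ℂ) →L[ℂ] ℓ²(GPath V Edg r s, ℂ))}
  {Le : Edg → (ℓ²(GPath V Edg r s, ℂ) →L[ℂ] ℓ²(GPath V Edg r s, ℂ))}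

variable (Lv Le) in
def pathOp (b : V) : List Edg → (ℓ²(GPath V Edg r s, ℂ) →L[ℂ] ℓ²(GPath V Edg r s, ℂ))
  | [] => Lv b
  | e :: es => Le e * pathOp b es

theorem pathOp_mem_adjoin (b : V) (es : List Edg) :
    pathOp Lv Le b es ∈ NonUnitalStarAlgebra.adjoin ℂ (range Lv ∪ range Le) := by
  induction es with
  | nil => exact NonUnitalStarAlgebra.subset_adjoin ℂ _ (Or.inl ⟨b, rfl⟩)
  | cons e es ih => exact mul_mem (NonUnitalStarAlgebra.subset_adjoin ℂ _ (Or.inr ⟨e, rfl⟩)) ih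

theorem mem_toeplitzGraphAlgebra_of_mem_adjoin
    {x : ℓ²(GPath V Edg r s, ℂ) →L[ℂ] ℓ²(GPath V Edg r s, ℂ)}
    (hx : x ∈ NonUnitalStarAlgebra.adjoin ℂ (range Lv ∪ range Le)) :
    x ∈ toeplitzGraphAlgebra Lv Le :=
  NonUnitalStarSubalgebra.le_topologicalClosure _ hx

theorem gap_mem_adjoin (hfin : ∀ v : V, {e : Edg | r e = v}.Finite) (v : V) :
    Lv v - ∑ e ∈ (hfin v).toFinset, Le e * star (Le e) ∈
      NonUnitalStarAlgebra.adjoin ℂ (range Lv ∪ range Le) := by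
  have hLe (e : Edg) : Le e ∈ NonUnitalStarAlgebra.adjoin ℂ (range Lv ∪ range Le) :=
    NonUnitalStarAlgebra.subset_adjoin ℂ _ (Or.inr ⟨e, rfl⟩)
  exact sub_mem (NonUnitalStarAlgebra.subset_adjoin ℂ _ (Or.inl ⟨v, rfl⟩))
    (sum_mem fun e _ => mul_mem (hLe e) (star_mem (hLe e)))

variable (hT : IsLeftRegularTCK Lv Le)
include hT

theorem Lv_ξ (v : V) (p : GPath V Edg r s) : Lv v (ξ p) = if p.range = v then ξ p else 0 :=
  hT.1 v p

theorem Le_ξ {e : Edg} {p : GPath V Edg r s} (h : p.range = s e) :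
    Le e (ξ p) = ξ (p.cons e h) := by
  simpa [h, ξ] using hT.2.1 e p (p.cons e h) rfl rfl

theorem Le_ξ_of_ne {e : Edg} {p : GPath V Edg r s} (h : p.range ≠ s e) : Le e (ξ p) = 0 :=
  hT.2.2 e p h

theorem star_Le_ξ (e : Edg) (q : GPath V Edg r s) :
    star (Le e) (ξ q) = if q.edges.head? = some e then ξ q.tail else 0 := by
  refine lp.ext (funext fun p => ?_)
  rw [← inner_ξ_left, ContinuousLinearMap.star_eq_adjoint,
    ContinuousLinearMap.adjoint_inner_right]
  by_cases hp : p.range = s e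
  · rw [Le_ξ hT hp, inner_ξ_left, ξ_apply, GPath.cons_eq_iff]
    split_ifs <;> simp_all [ξ_apply, eq_comm]
  · rw [Le_ξ_of_ne hT hp, inner_zero_left]
    split_ifs with hq
    · rw [ξ_apply, if_neg]
      rintro rfl
      exact hp (GPath.range_tail hq)
    · rfl

theorem Le_mul_star_Le_ξ (e : Edg) (q : GPath V Edg r s) :
    (Le e * star (Le e)) (ξ q) = if q.edges.head? = some e then ξ q else 0 := by
  rw [ContinuousLinearMap.mul_def, ContinuousLinearMap.comp_apply, star_Le_ξ hT]
  split_ifs with hq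
  · rw [Le_ξ hT (GPath.range_tail hq), GPath.cons_tail hq]
  · exact map_zero _

theorem gap_apply_ξ (hfin : ∀ v : V, {e : Edg | r e = v}.Finite) (v : V)
    (q : GPath V Edg r s) :
    (Lv v - ∑ e ∈ (hfin v).toFinset, Le e * star (Le e)) (ξ q) =
      if q = GPath.vertex v then ξ q else 0 := by
  simp only [FunLike.coe_sub, Pi.sub_apply, FunLike.coe_sum, Finset.sum_apply,
    Le_mul_star_Le_ξ hT, Lv_ξ hT, GPath.eq_vertex_iff]
  cases hq : q.edges with
  | nil => simp [GPath.range_eq_base hq]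
  | cons e l =>
    rw [GPath.range_eq_of_head? (e := e) (by simp [hq])]
    simp [Finset.sum_ite_eq]

theorem gap_eq_rankOne (hfin : ∀ v : V, {e : Edg | r e = v}.Finite) (v : V) :
    Lv v - ∑ e ∈ (hfin v).toFinset, Le e * star (Le e) =
      rankOne ℂ (ξ (GPath.vertex v)) (ξ (GPath.vertex v)) :=
  continuousLinearMap_ext_ξ fun q => by
    rw [gap_apply_ξ hT, rankOne_ξ_apply_ξ]
    split_ifs with h h' h' <;> simp_all

theorem pathOp_apply_ξ_vertex (p : GPath V Edg r s) :
    pathOp Lv Le p.base p.edges (ξ (GPath.vertex p.base)) = ξ p := by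
  induction hp : p.edges generalizing p with
  | nil =>
    rw [pathOp, Lv_ξ hT, GPath.vertex_range, if_pos rfl]
    exact congrArg ξ (GPath.eq_vertex_iff.2 ⟨hp, rfl⟩).symm
  | cons e es ih =>
    have he : p.edges.head? = some e := by simp [hp]
    rw [pathOp, ContinuousLinearMap.mul_def, ContinuousLinearMap.comp_apply,
      ← p.tail_base, ih p.tail (by simp [hp]), Le_ξ hT (GPath.range_tail he), GPath.cons_tail he]

theorem rankOne_ξ_eq_pathOp_mul_gap_mul (hfin : ∀ v : V, {e : Edg | r e = v}.Finite)
    {p q : GPath V Edg r s} (h : p.base = q.base) :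
    rankOne ℂ (ξ p) (ξ q) = pathOp Lv Le p.base p.edges *
      (Lv p.base - ∑ e ∈ (hfin p.base).toFinset, Le e * star (Le e)) *
        star (pathOp Lv Le q.base q.edges) := by
  rw [gap_eq_rankOne hT, ContinuousLinearMap.mul_def, ContinuousLinearMap.mul_def,
    InnerProductSpace.comp_rankOne, InnerProductSpace.rankOne_comp,
    ContinuousLinearMap.star_eq_adjoint, ContinuousLinearMap.adjoint_adjoint,
    pathOp_apply_ξ_vertex hT, h, pathOp_apply_ξ_vertex hT]

theorem rankOne_ξ_mem_toeplitzGraphAlgebra (hfin : ∀ v : V, {e : Edg | r e = v}.Finite)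
    (p q : GPath V Edg r s) (h : p.base = q.base) :
    rankOne ℂ (ξ p) (ξ q) ∈ toeplitzGraphAlgebra Lv Le := by
  rw [rankOne_ξ_eq_pathOp_mul_gap_mul hT hfin h]
  exact mem_toeplitzGraphAlgebra_of_mem_adjoin (mul_mem (mul_mem
    (pathOp_mem_adjoin _ _) (gap_mem_adjoin hfin _)) (star_mem (pathOp_mem_adjoin _ _)))

theorem blockMatrixUnits_subset_of_gap_mem (hfin : ∀ v : V, {e : Edg | r e = v}.Finite)
    {J : Set (ℓ²(GPath V Edg r s, ℂ) →L[ℂ] ℓ²(GPath V Edg r s, ℂ))}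
    (hJ : IsClosedIdealOf (toeplitzGraphAlgebra Lv Le) J)
    (hgap : ∀ v : V, Lv v - ∑ e ∈ (hfin v).toFinset, Le e * star (Le e) ∈ J) (v : V) :
    blockMatrixUnits GPath.base v ⊆ J := by
  rintro _ ⟨p, q, hp, hq, rfl⟩
  rw [rankOne_ξ_eq_pathOp_mul_gap_mul hT hfin (hp.trans hq.symm)]
  exact hJ.mul_mem_right (mem_toeplitzGraphAlgebra_of_mem_adjoin
    (star_mem (pathOp_mem_adjoin _ _))) (hJ.mul_mem_left
      (mem_toeplitzGraphAlgebra_of_mem_adjoin (pathOp_mem_adjoin _ _)) (hgap _))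

theorem adjoin_topologicalClosure_le_blockDiagonal :
    (NonUnitalStarAlgebra.adjoin ℂ (range Lv ∪ range Le)).topologicalClosure ≤
      blockDiagonal (GPath.base : GPath V Edg r s → V) := by
  refine NonUnitalStarSubalgebra.topologicalClosure_minimal _
    (NonUnitalStarAlgebra.adjoin_le ?_) isClosed_blockDiagonal
  rintro _ (⟨v, rfl⟩ | ⟨e, rfl⟩) p
  · rw [Lv_ξ hT]
    split_ifs
    exacts [ξ_mem_blockSpace rfl, zero_mem _]
  · by_cases h : p.range = s e
    · rw [Le_ξ hT h]
      exact ξ_mem_blockSpace rfl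
    · rw [Le_ξ_of_ne hT h]
      exact zero_mem _

end LeftRegular

end

/-- For a row-finite directed graph `G`, realize `T(G)` via the left regular
Toeplitz–Cuntz–Krieger family `(Lv, Le)` on `ℓ²(E•)`.  The ideal `I_G` generated by the
gap projections `{Lv v − Σ_{e ∈ r⁻¹(v)} Le e (Le e)* : v ∈ V}` equals
`⊕_{v ∈ V} K(H_{G,v})` (the compact, block-diagonal elements of `T(G)`), and it is the
minimum essential ideal of `T(G)`: it is essential, and it is contained in every
essential closed ideal of `T(G)`. -/
theorem gap_ideal_eq_compact_blockDiagonal_and_minimum_essential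
    {V Edg : Type*} (r s : Edg → V) (hfin : ∀ v : V, {e : Edg | r e = v}.Finite)
    (Lv : V → (lp (fun _ : GPath V Edg r s => ℂ) 2 →L[ℂ]
      lp (fun _ : GPath V Edg r s => ℂ) 2))
    (Le : Edg → (lp (fun _ : GPath V Edg r s => ℂ) 2 →L[ℂ]
      lp (fun _ : GPath V Edg r s => ℂ) 2))
    (hTCK : IsLeftRegularTCK Lv Le) :
    -- `I` below is `⊕_{v ∈ V} K(H_{G,v})`, the compact block-diagonal part of `T(G)`
    ∀ I : Set (lp (fun _ : GPath V Edg r s => ℂ) 2 →L[ℂ] lp (fun _ : GPath V Edg r s => ℂ) 2),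
      I = {T | T ∈ toeplitzGraphAlgebra Lv Le ∧ IsCompactOperator T ∧
        ∀ v : V, ∀ x ∈ pathSpace V Edg r s v, T x ∈ pathSpace V Edg r s v} →
      -- `I` is a closed ideal of `T(G)` containing the gap projections,
      IsClosedIdealOf (toeplitzGraphAlgebra Lv Le) I ∧
      (∀ v : V, Lv v - ∑ e ∈ (hfin v).toFinset, Le e * star (Le e) ∈ I) ∧
      -- and is the smallest such, i.e. `I` is the ideal generated by the gaps;
      (∀ J, IsClosedIdealOf (toeplitzGraphAlgebra Lv Le) J →
        (∀ v : V, Lv v - ∑ e ∈ (hfin v).toFinset, Le e * star (Le e) ∈ J) → I ⊆ J) ∧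
      -- `I` is an essential ideal,
      (∀ J, IsClosedIdealOf (toeplitzGraphAlgebra Lv Le) J → (∃ y ∈ J, y ≠ 0) →
        ∃ x, x ∈ I ∩ J ∧ x ≠ 0) ∧
      -- and `I` is contained in every essential closed ideal of `T(G)`.
      (∀ J, IsClosedIdealOf (toeplitzGraphAlgebra Lv Le) J →
        (∀ J', IsClosedIdealOf (toeplitzGraphAlgebra Lv Le) J' → (∃ y ∈ J', y ≠ 0) →
          ∃ x, x ∈ J ∩ J' ∧ x ≠ 0) →
        I ⊆ J) := by
  intro I hI
  have hA := NonUnitalStarSubalgebra.isClosed_topologicalClosure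
    (NonUnitalStarAlgebra.adjoin ℂ (range Lv ∪ range Le))
  have hAβ := adjoin_topologicalClosure_le_blockDiagonal hTCK
  have hunits := rankOne_ξ_mem_toeplitzGraphAlgebra hTCK hfin
  obtain rfl : I = (blockDiagCompacts (GPath.base : GPath V Edg r s → V) :
      Set (ℓ²(GPath V Edg r s, ℂ) →L[ℂ] ℓ²(GPath V Edg r s, ℂ))) := by
    ext T
    rw [hI, SetLike.mem_coe, mem_blockDiagCompacts_iff hA hAβ hunits]
    exact ⟨fun h => ⟨h.1, h.2.1⟩,
      fun h => ⟨h.1, h.2, mapsTo_blockSpace_of_mem_blockDiagonal (hAβ h.1)⟩⟩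
  refine ⟨isClosedIdealOf_blockDiagCompacts hA hAβ hunits, fun v => ?_,
    fun J hJ hgap => blockDiagCompacts_subset hJ
      (blockMatrixUnits_subset_of_gap_mem hTCK hfin hJ hgap),
    fun J hJ ⟨y, hyJ, hy⟩ => exists_ne_zero_mem_blockDiagCompacts_inter hAβ hunits hJ hyJ hy,
    fun J hJ hess => blockDiagCompacts_subset hJ
      (blockMatrixUnits_subset_of_essential hA hAβ hunits hJ hess)⟩
  rw [gap_eq_rankOne hTCK]
  exact blockCompacts_le_blockDiagCompacts v
    (rankOne_mem_blockCompacts (ξ_mem_blockSpace rfl) (ξ_mem_blockSpace rfl))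
end
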